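/- Let F₁ := (y − x²/3, 2x³ − (2/3)xy), a quasi-homogeneous polynomial vector field of type t = (1,2) and degree 1. For every polynomial q ∈ ℝ[x,y] quasi-homogeneous of type (1,2) and degree 3 (i.e. q ∈ span{x³, xy}) there exists a polynomial p quasi-homogeneous of type (1,2) and degree 2 (i.e. p ∈ span{x², y}) such that ∇p·F₁ = q. (In the paper's notation, Cor(ℓ₃) = {0}: the operator ℓ₃ : P^t₂ → P^t₃, p ↦ ∇p·F₁, is surjective.) -/
import Mathlib


open MvPolynomial

/-- A polynomial in two variables is quasi-homogeneous of type `(t₁,t₂)` and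
degree `k` if every monomial `x^a y^b` occurring in it satisfies `t₁a + t₂b = k`. -/
def IsQH (t₁ t₂ k : ℕ) (p : MvPolynomial (Fin 2) ℝ) : Prop :=
  ∀ m ∈ p.support, t₁ * m 0 + t₂ * m 1 = k

/-- `∇p · (P,Q)` for a planar polynomial vector field `(P,Q)`. -/
noncomputable def gradDot (p P Q : MvPolynomial (Fin 2) ℝ) : MvPolynomial (Fin 2) ℝ :=
  pderiv 0 p * P + pderiv 1 p * Q

lemma grad_eq (α β : ℝ) :
    gradDot (C α * X 0 ^ 2 + C β * X 1) (X 1 - C (1 / 3 : ℝ) * X 0 ^ 2)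
      (C (2 : ℝ) * X 0 ^ 3 - C (2 / 3 : ℝ) * X 0 * X 1)
    = C (2 * β - 2 / 3 * α) * X 0 ^ 3 + C (2 * α - 2 / 3 * β) * (X 0 * X 1) := by
  have h23 : ((2 : ℝ) / 3) = 2 * (1 / 3) := by norm_num
  simp [gradDot, pderiv_X, Pi.single_apply, C_sub, C_mul, h23, map_ofNat]
  ring

lemma qh3_decomp (q : MvPolynomial (Fin 2) ℝ) (hq : IsQH 1 2 3 q) :
    q = C (coeff (Finsupp.single 0 3) q) * X 0 ^ 3
        + C (coeff (Finsupp.single 0 1 + Finsupp.single 1 1) q) * (X 0 * X 1) := by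
  have hX : (X 0 * X 1 : MvPolynomial (Fin 2) ℝ)
      = monomial (Finsupp.single 0 1 + Finsupp.single 1 1) 1 := by
    rw [X, X, monomial_mul, one_mul]
  ext m
  rw [coeff_add, hX]
  by_cases h30 : m = Finsupp.single 0 3
  · subst h30
    have hne : (Finsupp.single 0 1 + Finsupp.single 1 1 : Fin 2 →₀ ℕ)
        ≠ Finsupp.single 0 3 := by
      intro h
      have := DFunLike.congr_fun h 1
      simp [Finsupp.single_apply] at this
    simp [coeff_C_mul, coeff_X_pow, coeff_monomial, hne]
  · by_cases h11 : m = Finsupp.single 0 1 + Finsupp.single 1 1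
    · subst h11
      have hne : (Finsupp.single 0 3 : Fin 2 →₀ ℕ)
          ≠ Finsupp.single 0 1 + Finsupp.single 1 1 := by
        intro h
        have := DFunLike.congr_fun h 1
        simp [Finsupp.single_apply] at this
      simp [coeff_C_mul, coeff_X_pow, coeff_monomial, hne]
    · have hz : coeff m q = 0 := by
        by_contra hc
        have hm := hq m (by simpa [mem_support_iff] using hc)
        have h0 := hm
        -- m 0 + 2 * m 1 = 3
        have hcase : (m 0 = 3 ∧ m 1 = 0) ∨ (m 0 = 1 ∧ m 1 = 1) := by omega
        rcases hcase with ⟨ha, hb⟩ | ⟨ha, hb⟩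
        · apply h30
          ext i
          fin_cases i <;> simp [Finsupp.single_apply, ha, hb]
        · apply h11
          ext i
          fin_cases i <;> simp [Finsupp.single_apply, ha, hb]
      have hne1 : (Finsupp.single 0 3 : Fin 2 →₀ ℕ) ≠ m := fun h => h30 h.symm
      have hne2 : (Finsupp.single 0 1 + Finsupp.single 1 1 : Fin 2 →₀ ℕ) ≠ m :=
        fun h => h11 h.symm
      simp [hz, coeff_C_mul, coeff_X_pow, coeff_monomial, hne1, hne2]

/-- For `F₁ = (y − x²/3, 2x³ − (2/3)xy)` the operator
`ℓ₃ : Pᵗ₂ → Pᵗ₃`, `p ↦ ∇p·F₁` (type `t = (1,2)`) is surjective: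
`Cor(ℓ₃) = {0}`. -/
theorem ell3_surjective :
    ∀ q : MvPolynomial (Fin 2) ℝ, IsQH 1 2 3 q →
      ∃ p : MvPolynomial (Fin 2) ℝ, IsQH 1 2 2 p ∧
        gradDot p (X 1 - C (1 / 3 : ℝ) * X 0 ^ 2)
          (C (2 : ℝ) * X 0 ^ 3 - C (2 / 3 : ℝ) * X 0 * X 1) = q := by
  intro q hq
  set a := coeff (Finsupp.single 0 3) q with ha
  set b := coeff (Finsupp.single 0 1 + Finsupp.single 1 1) q with hb
  refine ⟨C ((3 * a + 9 * b) / 16) * X 0 ^ 2 + C ((9 * a + 3 * b) / 16) * X 1, ?_, ?_⟩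
  · intro m hm
    have hsub : m ∈ (C ((3 * a + 9 * b) / 16) * X 0 ^ 2 : MvPolynomial (Fin 2) ℝ).support
        ∪ (C ((9 * a + 3 * b) / 16) * X 1 : MvPolynomial (Fin 2) ℝ).support :=
      MvPolynomial.support_add hm
    rw [Finset.mem_union] at hsub
    rcases hsub with h | h
    · rw [C_mul_X_pow_eq_monomial] at h
      have := support_monomial_subset h
      simp only [Finset.mem_singleton] at this
      subst this
      simp [Finsupp.single_apply]
    · have h' : m ∈ (monomial (Finsupp.single 1 1) ((9 * a + 3 * b) / 16) :
          MvPolynomial (Fin 2) ℝ).support := by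
        rwa [← C_mul_X_pow_eq_monomial, pow_one]
      have := support_monomial_subset h'
      simp only [Finset.mem_singleton] at this
      subst this
      simp [Finsupp.single_apply]
  · rw [grad_eq]
    have h1 : 2 * ((9 * a + 3 * b) / 16) - 2 / 3 * ((3 * a + 9 * b) / 16) = a := by ring
    have h2 : 2 * ((3 * a + 9 * b) / 16) - 2 / 3 * ((9 * a + 3 * b) / 16) = b := by ring
    rw [h1, h2]
    exact (qh3_decomp q hq).symm
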